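/- Let (E,‖·‖) be a 𝒯_c-complete RN module over ℝ with base (Ω,𝓕,P) such that E has the countable concatenation property, k ∈ L⁰₊₊(𝓕), and G ⊆ E a 𝒯_c-closed subset with the countable concatenation property. If f ∈ E* is bounded from above on G, and ε ∈ L⁰₊₊(𝓕) and z ∈ G satisfy ⋁f(G) ≤ f(z) + ε, then there exists x₀ ∈ G such that: (1) x₀ ∈ K(f,k) + z; (2) ‖x₀ − z‖ ≤ k⁻¹·ε; (3) G ∩ (K(f,k) + x₀) = {x₀}. -/

import Mathlib

open MeasureTheory ENNReal Set Filter

namespace GYY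

variable {Ω : Type*} [MeasurableSpace Ω]

/-- `L⁰(𝓕)`: equivalence classes of real-valued random variables on `(Ω,𝓕,P)`. -/
abbrev L0 (P : Measure Ω) := Ω →ₘ[P] ℝ

/-- `L̄⁰(𝓕)`: equivalence classes of extended-real-valued random variables. -/
abbrev L0e (P : Measure Ω) := Ω →ₘ[P] EReal

/-- `L⁰₊₊(𝓕)`: the (classes of) random variables that are strictly positive a.s. -/
def L0pp (P : Measure Ω) : Set (L0 P) := {ε | ∀ᵐ ω ∂P, 0 < ε ω}

/-- The equivalence class `Ĩ_A` of the indicator function of a measurable set `A`. -/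
noncomputable def indL0 (P : Measure Ω) (A : Set Ω) (hA : MeasurableSet A) : L0 P :=
  AEEqFun.mk (A.indicator fun _ => (1 : ℝ)) (aestronglyMeasurable_const.indicator hA)

/-- A random metric space (RM space) with base `(Ω,𝓕,P)`. -/
structure RMSpace (P : Measure Ω) (E : Type*) where
  d : E → E → L0 P
  d_nonneg : ∀ p q, ∀ᵐ ω ∂P, 0 ≤ d p q ω
  d_eq_zero_iff : ∀ p q, d p q = 0 ↔ p = q
  d_symm : ∀ p q, d p q = d q p
  d_triangle : ∀ p q r, ∀ᵐ ω ∂P, d p r ω ≤ d p q ω + d q r ω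

/-- Convergence in probability `P` of a sequence in `L⁰(𝓕)`, i.e. convergence in the
`(ε,λ)`-topology of `L⁰(𝓕)` with the random metric `d(p,q) = |p - q|`. -/
def TendstoProb (P : Measure Ω) (r : ℕ → L0 P) (s : L0 P) : Prop :=
  ∀ ε : ℝ, 0 < ε → ∀ lam ∈ Ioo (0 : ℝ) 1, ∃ N : ℕ, ∀ n ≥ N,
    ENNReal.ofReal (1 - lam) < P {ω | |r n ω - s ω| < ε}

namespace RMSpace

variable {P : Measure Ω} {E : Type*} (M : RMSpace P E)

/-- Convergence of a sequence in the `(ε,λ)`-topology of an RM space. -/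
def TendstoEL (x : ℕ → E) (a : E) : Prop :=
  ∀ ε : ℝ, 0 < ε → ∀ lam ∈ Ioo (0 : ℝ) 1, ∃ N : ℕ, ∀ n ≥ N,
    ENNReal.ofReal (1 - lam) < P {ω | M.d (x n) a ω < ε}

/-- Cauchy sequence for the `d_{ε,λ}`-uniformity of an RM space. -/
def CauchySeqEL (x : ℕ → E) : Prop :=
  ∀ ε : ℝ, 0 < ε → ∀ lam ∈ Ioo (0 : ℝ) 1, ∃ N : ℕ, ∀ m ≥ N, ∀ n ≥ N,
    ENNReal.ofReal (1 - lam) < P {ω | M.d (x m) (x n) ω < ε}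

/-- `d_{ε,λ}`-completeness of an RM space (the `d_{ε,λ}`-uniformity is metrizable, hence
completeness is equivalent to sequential completeness). -/
def CompleteEL : Prop := ∀ x : ℕ → E, M.CauchySeqEL x → ∃ a, M.TendstoEL x a

/-- `φ : E → L̄⁰(𝓕)` is `𝒯_{ε,λ}`-lower semicontinuous: its epigraph
`epi(φ) = {(x,r) ∈ E × L⁰ : φ(x) ≤ r}` is closed in
`(E,𝒯_{ε,λ}) × (L⁰(𝓕),𝒯_{ε,λ})` (sequentially; both topologies are metrizable). -/
def LscEL (φ : E → L0e P) : Prop :=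
  ∀ (x : ℕ → E) (r : ℕ → L0 P) (a : E) (s : L0 P),
    (∀ n, ∀ᵐ ω ∂P, φ (x n) ω ≤ (r n ω : EReal)) →
    M.TendstoEL x a → TendstoProb P r s →
    ∀ᵐ ω ∂P, φ a ω ≤ (s ω : EReal)

end RMSpace

/-- `φ` is proper on `G`: `φ(x) > -∞` a.s. for every `x ∈ G`, and `φ(x) < +∞` a.s.
for some `x ∈ G`. -/
def ProperOn {E : Type*} {P : Measure Ω} (φ : E → L0e P) (G : Set E) : Prop :=
  (∀ x ∈ G, ∀ᵐ ω ∂P, ⊥ < φ x ω) ∧ ∃ x ∈ G, ∀ᵐ ω ∂P, φ x ω < ⊤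

/-- `φ` is bounded from below on `G` by an element of `L⁰(𝓕)`. -/
def BddBelowOn {E : Type*} {P : Measure Ω} (φ : E → L0e P) (G : Set E) : Prop :=
  ∃ ξ : L0 P, ∀ x ∈ G, ∀ᵐ ω ∂P, (ξ ω : EReal) ≤ φ x ω

/-- `φ` is bounded from above on `G` by an element of `L⁰(𝓕)`. -/
def BddAboveOn {E : Type*} {P : Measure Ω} (φ : E → L0e P) (G : Set E) : Prop :=
  ∃ ξ : L0 P, ∀ x ∈ G, ∀ᵐ ω ∂P, φ x ω ≤ (ξ ω : EReal)

/-- `η = ⋀ φ(G)`, the infimum of `φ(G)` in the complete lattice `L̄⁰(𝓕)`. -/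
def IsInfOn {E : Type*} {P : Measure Ω} (φ : E → L0e P) (G : Set E) (η : L0e P) : Prop :=
  (∀ x ∈ G, ∀ᵐ ω ∂P, η ω ≤ φ x ω) ∧
    ∀ ζ : L0e P, (∀ x ∈ G, ∀ᵐ ω ∂P, ζ ω ≤ φ x ω) → ∀ᵐ ω ∂P, ζ ω ≤ η ω

/-- `η = ⋁ φ(G)`, the supremum of `φ(G)` in the complete lattice `L̄⁰(𝓕)`. -/
def IsSupOn {E : Type*} {P : Measure Ω} (φ : E → L0e P) (G : Set E) (η : L0e P) : Prop :=
  (∀ x ∈ G, ∀ᵐ ω ∂P, φ x ω ≤ η ω) ∧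
    ∀ ζ : L0e P, (∀ x ∈ G, ∀ᵐ ω ∂P, φ x ω ≤ ζ ω) → ∀ᵐ ω ∂P, η ω ≤ ζ ω

/-- `s = ⋁ g(G)` for an `L⁰(𝓕)`-valued function `g`. -/
def IsSupOnR {E : Type*} {P : Measure Ω} (g : E → L0 P) (G : Set E) (s : L0 P) : Prop :=
  (∀ x ∈ G, ∀ᵐ ω ∂P, g x ω ≤ s ω) ∧
    ∀ c : L0 P, (∀ x ∈ G, ∀ᵐ ω ∂P, g x ω ≤ c ω) → ∀ᵐ ω ∂P, s ω ≤ c ω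

/-- The Cauchy property (for the `d_{ε,λ}`-uniformity of `L⁰(𝓕)`, i.e. the uniformity of
convergence in probability) of the net `{φ(m) : m ∈ M}` indexed by `M` directed by the
order of `X`. -/
def CauchyNetProb {X : Type*} [Preorder X] {P : Measure Ω} (φ : X → L0e P) (M : Set X) : Prop :=
  ∀ ε : ℝ, 0 < ε → ∀ lam ∈ Ioo (0 : ℝ) 1, ∃ m₀ ∈ M, ∀ m₁ ∈ M, ∀ m₂ ∈ M,
    m₀ ≤ m₁ → m₀ ≤ m₂ →
      ENNReal.ofReal (1 - lam) < P {ω | |(φ m₁ ω).toReal - (φ m₂ ω).toReal| < ε}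

/-- The section filter of the net `{x_g : g ∈ G}`, `x_g = g`, indexed by `G` directed by the
order of `X`; the net is Cauchy iff this filter is a Cauchy filter. -/
def netFilter {X : Type*} [Preorder X] (G : Set X) : Filter X :=
  ⨅ g ∈ G, 𝓟 {y | y ∈ G ∧ g ≤ y}

/-- A random normed module (RN module) over `ℝ` with base `(Ω,𝓕,P)`: a left module `E`
over the algebra `L⁰(𝓕)` together with an `L⁰`-norm. -/
structure RNModule (P : Measure Ω) (E : Type*) [AddCommGroup E] where
  smul : L0 P → E → E
  one_smul : ∀ x, smul 1 x = x
  mul_smul : ∀ ξ η x, smul (ξ * η) x = smul ξ (smul η x)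
  smul_add : ∀ ξ x y, smul ξ (x + y) = smul ξ x + smul ξ y
  add_smul : ∀ ξ η x, smul (ξ + η) x = smul ξ x + smul η x
  nm : E → L0 P
  nm_nonneg : ∀ x, ∀ᵐ ω ∂P, 0 ≤ nm x ω
  nm_eq_zero_iff : ∀ x, nm x = 0 ↔ x = 0
  nm_smul : ∀ ξ x, ∀ᵐ ω ∂P, nm (smul ξ x) ω = |ξ ω| * nm x ω
  nm_add_le : ∀ x y, ∀ᵐ ω ∂P, nm (x + y) ω ≤ nm x ω + nm y ω

/-- The `𝒯_c`-neighbourhood filter of a point `r` of `L⁰(𝓕)`, with base the closed balls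
`{s : |s - r| ≤ ε}`, `ε ∈ L⁰₊₊`. -/
def cNhdsL0 (P : Measure Ω) (r : L0 P) : Filter (L0 P) :=
  ⨅ ε ∈ L0pp P, 𝓟 {s | ∀ᵐ ω ∂P, |s ω - r ω| ≤ ε ω}

namespace RNModule

variable {P : Measure Ω} {E : Type*} [AddCommGroup E] (N : RNModule P E)

/-- Convergence of sequences in the `(ε,λ)`-topology `𝒯_{ε,λ}` of an RN module. -/
def TendstoEL (x : ℕ → E) (a : E) : Prop :=
  ∀ ε : ℝ, 0 < ε → ∀ lam ∈ Ioo (0 : ℝ) 1, ∃ N' : ℕ, ∀ n ≥ N',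
    ENNReal.ofReal (1 - lam) < P {ω | N.nm (x n - a) ω < ε}

/-- Cauchy sequence for the `d_{ε,λ}`-uniformity of an RN module. -/
def CauchySeqEL (x : ℕ → E) : Prop :=
  ∀ ε : ℝ, 0 < ε → ∀ lam ∈ Ioo (0 : ℝ) 1, ∃ N' : ℕ, ∀ m ≥ N', ∀ n ≥ N',
    ENNReal.ofReal (1 - lam) < P {ω | N.nm (x m - x n) ω < ε}

/-- `𝒯_{ε,λ}`-completeness (the `d_{ε,λ}`-uniformity is metrizable, hence completeness is
equivalent to sequential completeness). -/
def CompleteEL : Prop := ∀ x : ℕ → E, N.CauchySeqEL x → ∃ a, N.TendstoEL x a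

/-- `G` is `𝒯_{ε,λ}`-closed (sequentially; `𝒯_{ε,λ}` is metrizable). -/
def ClosedEL (G : Set E) : Prop :=
  ∀ (x : ℕ → E) (a : E), (∀ n, x n ∈ G) → N.TendstoEL x a → a ∈ G

/-- `φ : G → L̄⁰(𝓕)` is `𝒯_{ε,λ}`-lower semicontinuous on `G`: its epigraph
`{(x,r) ∈ G × L⁰ : φ(x) ≤ r}` is closed in `(G,𝒯_{ε,λ}) × (L⁰(𝓕),𝒯_{ε,λ})`. -/
def LscELOn (φ : E → L0e P) (G : Set E) : Prop :=
  ∀ (x : ℕ → E) (r : ℕ → L0 P) (a : E) (s : L0 P),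
    (∀ n, x n ∈ G) → a ∈ G →
    (∀ n, ∀ᵐ ω ∂P, φ (x n) ω ≤ (r n ω : EReal)) →
    N.TendstoEL x a → TendstoProb P r s →
    ∀ᵐ ω ∂P, φ a ω ≤ (s ω : EReal)

/-- The neighbourhood filter of `x` in the locally `L⁰`-convex topology `𝒯_c`,
whose base consists of the closed balls `{y : ‖y - x‖ ≤ ε}`, `ε ∈ L⁰₊₊`. -/
def cNhds (x : E) : Filter E :=
  ⨅ ε ∈ L0pp P, 𝓟 {y | ∀ᵐ ω ∂P, N.nm (y - x) ω ≤ ε ω}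

/-- The `d_c`-uniformity of an RN module, with base `{U(ε) : ε ∈ L⁰₊₊}`,
`U(ε) = {(p,q) : ‖p - q‖ ≤ ε}`. -/
def cUniformity : Filter (E × E) :=
  ⨅ ε ∈ L0pp P, 𝓟 {p | ∀ᵐ ω ∂P, N.nm (p.1 - p.2) ω ≤ ε ω}

/-- `𝒯_c`-completeness: every Cauchy filter for the `d_c`-uniformity converges. -/
def cComplete : Prop :=
  ∀ F : Filter E, F.NeBot → F ×ˢ F ≤ N.cUniformity → ∃ x, F ≤ N.cNhds x

/-- The `𝒯_c`-closure of a subset. -/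
def cClosure (G : Set E) : Set E := {x | (N.cNhds x ⊓ 𝓟 G).NeBot}

/-- `G` is `𝒯_c`-closed. -/
def cClosed (G : Set E) : Prop := ∀ x, x ∈ N.cClosure G → x ∈ G

/-- `S` is `𝒯_c`-dense in `T`. -/
def cDenseIn (S T : Set E) : Prop := ∀ x ∈ T, x ∈ N.cClosure S

/-- The `𝒯_c`-boundary `∂_c G`. -/
def cBoundary (G : Set E) : Set E := N.cClosure G ∩ N.cClosure Gᶜ

/-- `φ : G → L̄⁰(𝓕)` is `𝒯_c`-lower semicontinuous on `G`: its epigraph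
`{(x,r) ∈ G × L⁰ : φ(x) ≤ r}` is closed in `(G,𝒯_c) × (L⁰(𝓕),𝒯_c)`. -/
def cLscOn (φ : E → L0e P) (G : Set E) : Prop :=
  ∀ (a : E) (s : L0 P), a ∈ G →
    ((N.cNhds a ×ˢ cNhdsL0 P s) ⊓
      𝓟 {p : E × L0 P | p.1 ∈ G ∧ ∀ᵐ ω ∂P, φ p.1 ω ≤ (p.2 ω : EReal)}).NeBot →
    ∀ᵐ ω ∂P, φ a ω ≤ (s ω : EReal)

/-- The countable concatenation property of a subset `G` of an RN module. -/
def HasCC (G : Set E) : Prop :=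
  ∀ (x : ℕ → E), (∀ n, x n ∈ G) →
    ∀ (A : ℕ → Set Ω) (hA : ∀ n, MeasurableSet (A n)),
      (∀ i j, i ≠ j → Disjoint (A i) (A j)) → (⋃ n, A n) = univ →
        ∃ y ∈ G, ∀ n, N.smul (indL0 P (A n) (hA n)) y = N.smul (indL0 P (A n) (hA n)) (x n)

/-- The countable concatenation property of a subset of the product `L⁰(𝓕)`-module
`E × L⁰(𝓕)` (with componentwise module operations). -/
def HasCCProd (G : Set (E × L0 P)) : Prop :=
  ∀ (p : ℕ → E × L0 P), (∀ n, p n ∈ G) →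
    ∀ (A : ℕ → Set Ω) (hA : ∀ n, MeasurableSet (A n)),
      (∀ i j, i ≠ j → Disjoint (A i) (A j)) → (⋃ n, A n) = univ →
        ∃ q ∈ G, ∀ n,
          N.smul (indL0 P (A n) (hA n)) q.1 = N.smul (indL0 P (A n) (hA n)) (p n).1 ∧
          indL0 P (A n) (hA n) * q.2 = indL0 P (A n) (hA n) * (p n).2

/-- The local property of an `L̄⁰(𝓕)`-valued function:
`Ĩ_A·φ(x) = Ĩ_A·φ(Ĩ_A·x)` for all `x ∈ E`, `A ∈ 𝓕`, i.e. `φ(x) = φ(Ĩ_A x)` a.s. on `A`. -/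
def LocalProp (φ : E → L0e P) : Prop :=
  ∀ (x : E) (A : Set Ω) (hA : MeasurableSet A),
    ∀ᵐ ω ∂P, ω ∈ A → φ x ω = φ (N.smul (indL0 P A hA) x) ω

/-- `G` is `L⁰(𝓕)`-convex. -/
def L0Convex (G : Set E) : Prop :=
  ∀ x ∈ G, ∀ y ∈ G, ∀ ξ η : L0 P,
    (∀ᵐ ω ∂P, 0 ≤ ξ ω) → (∀ᵐ ω ∂P, 0 ≤ η ω) → ξ + η = 1 →
      N.smul ξ x + N.smul η y ∈ G

/-- `G` is a.s. bounded: `⋁{‖p‖ : p ∈ G} ∈ L⁰₊(𝓕)`. -/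
def ASBounded (G : Set E) : Prop :=
  ∃ ξ : L0 P, ∀ p ∈ G, ∀ᵐ ω ∂P, N.nm p ω ≤ ξ ω

/-- Membership in the random conjugate space `E*`: `f` is an a.s. bounded random linear
functional, i.e. an `L⁰(𝓕)`-linear map `f : E → L⁰(𝓕)` with `|f(x)| ≤ ξ·‖x‖` for all `x`
for some `ξ ∈ L⁰₊(𝓕)`. -/
def IsDual (f : E → L0 P) : Prop :=
  (∀ x y, f (x + y) = f x + f y) ∧
  (∀ (ξ : L0 P) (x : E), f (N.smul ξ x) = ξ * f x) ∧
  ∃ ξ : L0 P, (∀ᵐ ω ∂P, 0 ≤ ξ ω) ∧ ∀ x, ∀ᵐ ω ∂P, |f x ω| ≤ ξ ω * N.nm x ω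

/-- `nf = ‖f‖* := ⋀{ξ ∈ L⁰₊ : |f(x)| ≤ ξ‖x‖ for all x ∈ E}`, the random norm of `E*`. -/
def IsDualNorm (f : E → L0 P) (nf : L0 P) : Prop :=
  (∀ ξ : L0 P, ((∀ᵐ ω ∂P, 0 ≤ ξ ω) ∧ ∀ x, ∀ᵐ ω ∂P, |f x ω| ≤ ξ ω * N.nm x ω) →
    ∀ᵐ ω ∂P, nf ω ≤ ξ ω) ∧
  (∀ c : L0 P,
    (∀ ξ : L0 P, ((∀ᵐ ω ∂P, 0 ≤ ξ ω) ∧ ∀ x, ∀ᵐ ω ∂P, |f x ω| ≤ ξ ω * N.nm x ω) →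
      ∀ᵐ ω ∂P, c ω ≤ ξ ω) → ∀ᵐ ω ∂P, c ω ≤ nf ω)

/-- The cone `K(f,k) = {y ∈ E : k‖y‖ ≤ f(y)}`. -/
def Kcone (f : E → L0 P) (k : L0 P) : Set E := {y | ∀ᵐ ω ∂P, k ω * N.nm y ω ≤ f y ω}

/-- `f ∈ E*∖{0}`, bounded from above on `G`, supports `G` at some point:
`f(x) = ⋁f(G)` for some `x ∈ G`. -/
def Supports (G : Set E) (f : E → L0 P) : Prop :=
  N.IsDual f ∧ f ≠ 0 ∧ (∃ ξ : L0 P, ∀ x ∈ G, ∀ᵐ ω ∂P, f x ω ≤ ξ ω) ∧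
    ∃ x ∈ G, IsSupOnR f G (f x)

/-- The set of support points of `G`: points `x ∈ G` at which some
`f ∈ E*∖{0}`, bounded from above on `G`, attains `f(x) = ⋁f(G)`. -/
def SupportPoints (G : Set E) : Set E :=
  {x | x ∈ G ∧ ∃ f : E → L0 P, N.IsDual f ∧ f ≠ 0 ∧
    (∃ ξ : L0 P, ∀ y ∈ G, ∀ᵐ ω ∂P, f y ω ≤ ξ ω) ∧ IsSupOnR f G (f x)}

end RNModule

/-!
Work in the order `v ⪯ u :⟺ u - v ∈ K(f,k)`. Starting from `z`, choose `xₙ₊₁ ⪰ xₙ` in `G` whose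
`f`-value is within `1/(n+1)` of the essential supremum of `f` over `{u ∈ G : u ⪰ xₙ}`; the
countable concatenation property makes the values of `f` on this set closed under
concatenation, so that essential supremum is nearly attained (it is located through the bounded,
strictly increasing `∫ arctan`). Two points above `xₙ` then satisfy `k‖u - u'‖ ≤ 2/(n+1)`, so the
tails of the sequence, cut at random indices and glued by concatenation, form a `d_c`-Cauchy
filter. Its limit `x₀` lies in `G` and above every `xₙ`; a point of `G` above `x₀` lies above all
`xₙ`, so its `f`-value does not exceed `f(x₀)`, and the cone inequality forces it to be `x₀`.
Finally `k‖x₀ - z‖ ≤ f(x₀) - f(z) ≤ ⋁f(G) - f(z) ≤ ε`.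
-/

open Topology

section L0

variable {P : Measure Ω}

theorem ae_nonneg_of_mem_L0pp {e : L0 P} (he : e ∈ L0pp P) : ∀ᵐ ω ∂P, 0 ≤ e ω :=
  Eventually.mono he fun _ h => h.le

/-- The countable concatenation property for a subset of `L⁰(𝓕)`, phrased with a.s. covers
instead of partitions. -/
def ConcatClosed (Φ : Set (L0 P)) : Prop :=
  ∀ a : ℕ → L0 P, (∀ j, a j ∈ Φ) → ∀ B : ℕ → Set Ω, (∀ j, MeasurableSet (B j)) →
    (∀ᵐ ω ∂P, ∃ j, ω ∈ B j) → ∃ b ∈ Φ, ∀ᵐ ω ∂P, ∃ j, ω ∈ B j ∧ b ω = a j ω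

namespace ConcatClosed

variable {Φ : Set (L0 P)}

theorem sup_mem (hΦ : ConcatClosed Φ) {a b : L0 P} (ha : a ∈ Φ) (hb : b ∈ Φ) : a ⊔ b ∈ Φ := by
  let c : ℕ → L0 P := fun j => if j = 0 then a else b
  have hc : ∀ j, c j ∈ Φ := fun j => by by_cases h : j = 0 <;> simp [c, h, ha, hb]
  have hcov : ∀ᵐ ω ∂P, ∃ j, ω ∈ {ω | max (a ω) (b ω) = c j ω} := by
    refine .of_forall fun ω => ?_
    rcases le_total (b ω) (a ω) with h | h
    · exact ⟨0, by simp [c, h]⟩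
    · exact ⟨1, by simp [c, h]⟩
  obtain ⟨d, hd, hdc⟩ := hΦ c hc _
    (fun j => measurableSet_eq_fun (by fun_prop) (c j).stronglyMeasurable.measurable) hcov
  convert hd using 1
  refine AEEqFun.ext ?_
  filter_upwards [AEEqFun.coeFn_sup a b, hdc] with ω hsup ⟨j, hj, hdj⟩
  rw [hsup, hdj]
  exact hj

theorem partialSups_mem (hΦ : ConcatClosed Φ) {a : ℕ → L0 P} (ha : ∀ j, a j ∈ Φ) (n : ℕ) :
    partialSups a n ∈ Φ := by
  induction n with
  | zero => simpa using ha 0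
  | succ n ih => rw [← Order.succ_eq_add_one, partialSups_succ]; exact hΦ.sup_mem ih (ha _)

end ConcatClosed

section Arctan

open Real

variable [IsFiniteMeasure P]

theorem integrable_arctan_comp {g : Ω → ℝ} (hg : AEStronglyMeasurable g P) :
    Integrable (fun ω => arctan (g ω)) P :=
  (integrable_const (π / 2)).mono' (continuous_arctan.comp_aestronglyMeasurable hg)
    (.of_forall fun _ => abs_le.2 ⟨(neg_pi_div_two_lt_arctan _).le, (arctan_lt_pi_div_two _).le⟩)

theorem tendsto_integral_arctan_comp {g : ℕ → Ω → ℝ} {h : Ω → ℝ}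
    (hg : ∀ j, AEStronglyMeasurable (g j) P)
    (hlim : ∀ᵐ ω ∂P, Tendsto (fun j => g j ω) atTop (𝓝 (h ω))) :
    Tendsto (fun j => ∫ ω, arctan (g j ω) ∂P) atTop (𝓝 (∫ ω, arctan (h ω) ∂P)) :=
  tendsto_integral_of_dominated_convergence (fun _ => π / 2)
    (fun j => (integrable_arctan_comp (hg j)).1) (integrable_const _)
    (fun _ => .of_forall fun _ =>
      abs_le.2 ⟨(neg_pi_div_two_lt_arctan _).le, (arctan_lt_pi_div_two _).le⟩)
    (hlim.mono fun _ h => (continuous_arctan.tendsto _).comp h)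

theorem ae_le_of_integral_arctan_max_le {g h : Ω → ℝ} (hg : AEStronglyMeasurable g P)
    (hh : AEStronglyMeasurable h P)
    (hle : ∫ ω, arctan (max (g ω) (h ω)) ∂P ≤ ∫ ω, arctan (h ω) ∂P) :
    ∀ᵐ ω ∂P, g ω ≤ h ω := by
  have hmono : (fun ω => arctan (h ω)) ≤ᵐ[P] fun ω => arctan (max (g ω) (h ω)) :=
    .of_forall fun ω => arctan_mono (le_max_right _ _)
  have heq := (integral_eq_iff_of_ae_le (integrable_arctan_comp hh)
    (integrable_arctan_comp (hg.sup hh)) hmono).1 (le_antisymm (integral_mono_ae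
      (integrable_arctan_comp hh) (integrable_arctan_comp (hg.sup hh)) hmono) hle)
  filter_upwards [heq] with ω hω
  exact max_eq_right_iff.1 (arctan_injective hω).symm

/-- The sequence is increasing with `∫ arctan bⱼ → sup_{a ∈ Φ} ∫ arctan a`; since `arctan` is
strictly increasing, no `a ∈ Φ` can exceed `⋁ⱼ bⱼ` on a set of positive measure. -/
theorem ConcatClosed.exists_seq_ae_le_iSup {Φ : Set (L0 P)} (hΦ : ConcatClosed Φ)
    (hne : Φ.Nonempty) {ξ : L0 P} (hξ : ∀ a ∈ Φ, ∀ᵐ ω ∂P, a ω ≤ ξ ω) :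
    ∃ b : ℕ → L0 P, (∀ j, b j ∈ Φ) ∧ ∀ a ∈ Φ, ∀ᵐ ω ∂P, a ω ≤ ⨆ j, b j ω := by
  set I : L0 P → ℝ := fun a => ∫ ω, arctan (a ω) ∂P
  have hI : BddAbove (I '' Φ) := by
    refine ⟨∫ _ : Ω, π / 2 ∂P, ?_⟩
    rintro _ ⟨a, -, rfl⟩
    exact integral_mono (integrable_arctan_comp a.aestronglyMeasurable) (integrable_const _)
      fun ω => (arctan_lt_pi_div_two _).le
  set m := sSup (I '' Φ)
  have happrox : ∀ j : ℕ, ∃ a ∈ Φ, m - 1 / (j + 1) < I a := fun j => by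
    obtain ⟨_, ⟨a, ha, rfl⟩, hlt⟩ :=
      exists_lt_of_lt_csSup (hne.image I) (sub_lt_self m (show (0 : ℝ) < 1 / (j + 1) by positivity))
    exact ⟨a, ha, hlt⟩
  choose a ha hIa using happrox
  set b := partialSups a
  have hb : ∀ j, b j ∈ Φ := hΦ.partialSups_mem ha
  have hb_mono : ∀ᵐ ω ∂P, Monotone fun j => b j ω := by
    filter_upwards [ae_all_iff.2 fun j =>
      AEEqFun.coeFn_le.2 (partialSups_monotone a (Nat.le_succ j))] with ω h
    exact monotone_nat_of_le_succ h
  have hb_bdd : ∀ᵐ ω ∂P, BddAbove (range fun j => b j ω) := by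
    filter_upwards [ae_all_iff.2 fun j => hξ _ (hb j)] with ω h
    exact ⟨ξ ω, by rintro _ ⟨j, rfl⟩; exact h j⟩
  set g : Ω → ℝ := fun ω => ⨆ j, b j ω
  have hg : Measurable g := Measurable.iSup fun j => (b j).stronglyMeasurable.measurable
  have hm_le : m ≤ ∫ ω, arctan (g ω) ∂P := by
    refine le_of_forall_pos_lt_add fun δ hδ => ?_
    obtain ⟨j, hj⟩ := exists_nat_one_div_lt hδ
    have : I (a j) ≤ ∫ ω, arctan (g ω) ∂P := by
      refine integral_mono_ae (integrable_arctan_comp (a j).aestronglyMeasurable)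
        (integrable_arctan_comp hg.aestronglyMeasurable) ?_
      filter_upwards [AEEqFun.coeFn_le.2 (le_partialSups a j), hb_bdd] with ω h1 h2
      exact arctan_mono (h1.trans (le_ciSup h2 j))
    linarith [hIa j]
  refine ⟨b, hb, fun c hc => ae_le_of_integral_arctan_max_le c.aestronglyMeasurable
    hg.aestronglyMeasurable (le_trans ?_ hm_le)⟩
  have hlim : ∀ᵐ ω ∂P, Tendsto (fun j => (c ⊔ b j) ω) atTop (𝓝 (max (c ω) (g ω))) := by
    filter_upwards [hb_mono, hb_bdd, ae_all_iff.2 fun j => AEEqFun.coeFn_sup c (b j)]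
      with ω h1 h2 h3
    simp_rw [h3]
    exact tendsto_const_nhds.max (tendsto_atTop_ciSup h1 h2)
  exact le_of_tendsto' (tendsto_integral_arctan_comp (fun j => (c ⊔ b j).aestronglyMeasurable)
    hlim) fun j => le_csSup hI ⟨_, hΦ.sup_mem hc (hb j), rfl⟩

theorem ConcatClosed.exists_forall_ae_le_add {Φ : Set (L0 P)} (hΦ : ConcatClosed Φ)
    (hne : Φ.Nonempty) {ξ : L0 P} (hξ : ∀ a ∈ Φ, ∀ᵐ ω ∂P, a ω ≤ ξ ω) {δ : ℝ} (hδ : 0 < δ) :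
    ∃ b ∈ Φ, ∀ a ∈ Φ, ∀ᵐ ω ∂P, a ω ≤ b ω + δ := by
  obtain ⟨b, hb, hsup⟩ := hΦ.exists_seq_ae_le_iSup hne hξ
  have hmeas : ∀ j, MeasurableSet {ω | ⨆ i, b i ω ≤ b j ω + δ} := fun j =>
    measurableSet_le (Measurable.iSup fun i => (b i).stronglyMeasurable.measurable)
      ((b j).stronglyMeasurable.measurable.add_const δ)
  have hcov : ∀ᵐ ω ∂P, ∃ j, ω ∈ {ω | ⨆ i, b i ω ≤ b j ω + δ} := .of_forall fun ω => by
    obtain ⟨j, hj⟩ := exists_lt_of_lt_ciSup (sub_lt_self (⨆ i, b i ω) hδ)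
    exact ⟨j, (sub_lt_iff_lt_add.1 hj).le⟩
  obtain ⟨c, hc, hcb⟩ := hΦ b hb _ hmeas hcov
  refine ⟨c, hc, fun a ha => ?_⟩
  filter_upwards [hsup a ha, hcb] with ω h ⟨j, hj, hcj⟩
  rw [hcj]
  exact h.trans hj

end Arctan

end L0

namespace RNModule

variable {P : Measure Ω} {E : Type*} [AddCommGroup E]

section Gluing

variable (N : RNModule P E)

theorem smul_neg_one (x : E) : N.smul (-1) x = -x := by
  simpa [N.one_smul] using (AddMonoidHom.mk' (N.smul · x) (N.add_smul · · x)).map_neg 1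

theorem nm_neg (x : E) : ∀ᵐ ω ∂P, N.nm (-x) ω = N.nm x ω := by
  filter_upwards [N.nm_smul (-1) x, AEEqFun.coeFn_neg (1 : L0 P), AEEqFun.coeFn_one (β := ℝ)]
    with ω h1 h2 h3
  rw [← N.smul_neg_one, h1, h2]
  simp [h3]

theorem nm_sub_comm (x y : E) : ∀ᵐ ω ∂P, N.nm (x - y) ω = N.nm (y - x) ω := by
  simpa using N.nm_neg (y - x)

theorem nm_sub_le_nm_sub_add (u v w : E) :
    ∀ᵐ ω ∂P, N.nm (u - w) ω ≤ N.nm (u - v) ω + N.nm (v - w) ω := by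
  simpa using N.nm_add_le (u - v) (v - w)

theorem smul_sub (ξ : L0 P) (x y : E) : N.smul ξ (x - y) = N.smul ξ x - N.smul ξ y :=
  (AddMonoidHom.mk' (N.smul ξ) (N.smul_add ξ)).map_sub x y

theorem eq_of_ae_nm_sub_eq_zero {x y : E} (h : ∀ᵐ ω ∂P, N.nm (x - y) ω = 0) : x = y := by
  refine sub_eq_zero.1 ((N.nm_eq_zero_iff _).1 (AEEqFun.ext ?_))
  filter_upwards [h, AEEqFun.coeFn_zero (β := ℝ)] with ω h1 h2
  rw [h1, h2, Pi.zero_apply]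

def AEEqOn (A : Set Ω) (x y : E) : Prop := ∀ᵐ ω ∂P, ω ∈ A → N.nm (x - y) ω = 0

variable {N}

theorem IsDual.map_sub {f : E → L0 P} (hf : N.IsDual f) (x y : E) : f (x - y) = f x - f y :=
  (AddMonoidHom.mk' f hf.1).map_sub x y

theorem IsDual.apply_sub {f : E → L0 P} (hf : N.IsDual f) (x y : E) :
    ∀ᵐ ω ∂P, f (x - y) ω = f x ω - f y ω := by
  rw [hf.map_sub]
  exact AEEqFun.coeFn_sub _ _

theorem aeEqOn_of_smul_indL0_eq {A : Set Ω} (hA : MeasurableSet A) {x y : E}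
    (h : N.smul (indL0 P A hA) x = N.smul (indL0 P A hA) y) : N.AEEqOn A x y := by
  have hzero : ∀ᵐ ω ∂P, N.nm (N.smul (indL0 P A hA) (x - y)) ω = 0 := by
    rw [(N.nm_eq_zero_iff _).2 (by rw [N.smul_sub, h, sub_self])]
    exact AEEqFun.coeFn_zero
  have hind : ∀ᵐ ω ∂P, indL0 P A hA ω = A.indicator (fun _ => (1 : ℝ)) ω := AEEqFun.coeFn_mk _ _
  filter_upwards [N.nm_smul (indL0 P A hA) (x - y), hzero, hind] with ω h1 h2 h3 hω
  simpa [h2, h3, hω, eq_comm] using h1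

theorem AEEqOn.nm_sub_eq {A : Set Ω} {x y : E} (h : N.AEEqOn A x y) (w : E) :
    ∀ᵐ ω ∂P, ω ∈ A → N.nm (x - w) ω = N.nm (y - w) ω := by
  filter_upwards [h, N.nm_sub_le_nm_sub_add x y w, N.nm_sub_le_nm_sub_add y x w,
    N.nm_sub_comm x y] with ω h0 h1 h2 h3 hω
  rw [h0 hω] at h1
  rw [← h3, h0 hω] at h2
  linarith

theorem AEEqOn.apply_eq {f : E → L0 P} (hf : N.IsDual f) {A : Set Ω} {x y : E}
    (h : N.AEEqOn A x y) : ∀ᵐ ω ∂P, ω ∈ A → f x ω = f y ω := by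
  obtain ⟨ξ, -, hξ⟩ := hf.2.2
  filter_upwards [hf.apply_sub x y, hξ (x - y), h] with ω h1 h2 h3 hω
  rw [h3 hω, mul_zero, abs_nonpos_iff, h1] at h2
  linarith

theorem HasCC.exists_aeEqOn {G : Set E} (hG : N.HasCC G) {u : ℕ → E} (hu : ∀ j, u j ∈ G)
    {B : ℕ → Set Ω} (hB : ∀ j, MeasurableSet (B j)) (hcov : ∀ᵐ ω ∂P, ∃ j, ω ∈ B j) :
    ∃ w ∈ G, ∃ A : ℕ → Set Ω,
      (∀ᵐ ω ∂P, ∃ j, ω ∈ A j) ∧ ∀ j, A j ⊆ B j ∧ N.AEEqOn (A j) w (u j) := by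
  set B' : ℕ → Set Ω := fun j => B j ∪ (⋃ i, B i)ᶜ
  have hB' : ⋃ j, B' j = univ := by
    refine eq_univ_of_forall fun ω => ?_
    by_cases h : ω ∈ ⋃ i, B i
    · obtain ⟨j, hj⟩ := mem_iUnion.1 h
      exact mem_iUnion.2 ⟨j, Or.inl hj⟩
    · exact mem_iUnion.2 ⟨0, Or.inr h⟩
  have hmeas : ∀ j, MeasurableSet (disjointed B' j) :=
    MeasurableSet.disjointed fun j => (hB j).union (MeasurableSet.iUnion hB).compl
  obtain ⟨w, hwG, hw⟩ := hG u hu (disjointed B') hmeas (fun i j hij => disjoint_disjointed B' hij)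
    (by rw [iUnion_disjointed, hB'])
  refine ⟨w, hwG, fun j => disjointed B' j ∩ B j, ?_, fun j => ⟨inter_subset_right, ?_⟩⟩
  · filter_upwards [hcov] with ω ⟨i, hi⟩
    obtain ⟨j, hj⟩ : ∃ j, ω ∈ disjointed B' j := by
      rw [← mem_iUnion, iUnion_disjointed, hB']
      exact mem_univ ω
    refine ⟨j, hj, (disjointed_subset B' j hj).resolve_right fun h => h (mem_iUnion.2 ⟨i, hi⟩)⟩
  · filter_upwards [aeEqOn_of_smul_indL0_eq (hmeas j) (hw j)] with ω h hω
    exact h hω.1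

theorem HasCC.exists_aeEqOn_piecewise {G : Set E} (hG : N.HasCC G) {u v : E} (hu : u ∈ G)
    (hv : v ∈ G) {A : Set Ω} (hA : MeasurableSet A) :
    ∃ w ∈ G, N.AEEqOn A w u ∧ N.AEEqOn Aᶜ w v := by
  obtain ⟨w, hwG, A', hcov, hA'⟩ := hG.exists_aeEqOn (u := fun j => if j = 0 then u else v)
    (fun j => by by_cases h : j = 0 <;> simp [h, hu, hv])
    (B := fun j => if j = 0 then A else Aᶜ)
    (fun j => by by_cases h : j = 0 <;> simp [h, hA, hA.compl])
    (.of_forall fun ω => by by_cases h : ω ∈ A; exacts [⟨0, by simpa⟩, ⟨1, by simpa⟩])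
  refine ⟨w, hwG, ?_, ?_⟩ <;>
  filter_upwards [hcov, ae_all_iff.2 fun j => (hA' j).2] with ω ⟨j, hj⟩ heq hω <;>
  rcases j with _ | j
  · simpa using heq 0 hj
  · exact absurd ((hA' (j + 1)).1 hj) (by simpa using hω)
  · exact absurd hω (by simpa using (hA' 0).1 hj)
  · simpa using heq (j + 1) hj

end Gluing

section ConeOrder

variable (N : RNModule P E) (k : L0 P) (f : E → L0 P)

/-- The order of the cone `K(f,k)`, localized to `A`. -/
def ConeLE (A : Set Ω) (v u : E) : Prop :=
  ∀ᵐ ω ∂P, ω ∈ A → k ω * N.nm (u - v) ω ≤ f u ω - f v ω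

theorem coneLE_refl (A : Set Ω) (v : E) : N.ConeLE k f A v v := by
  have h0 : ∀ᵐ ω ∂P, N.nm (v - v) ω = 0 := by
    rw [sub_self, (N.nm_eq_zero_iff 0).2 rfl]
    exact AEEqFun.coeFn_zero
  filter_upwards [h0] with ω h _
  rw [h, mul_zero, sub_self]

variable {N k f} {A C : Set Ω} {u v w : E}

theorem AEEqOn.mono (h : N.AEEqOn C u v) (hAC : A ⊆ C) : N.AEEqOn A u v :=
  Eventually.mono h fun _ h hω => h (hAC hω)

theorem ConeLE.mono (h : N.ConeLE k f C v u) (hAC : A ⊆ C) : N.ConeLE k f A v u :=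
  Eventually.mono h fun _ h hω => h (hAC hω)

theorem ConeLE.union (h : N.ConeLE k f A v u) (h' : N.ConeLE k f C v u) :
    N.ConeLE k f (A ∪ C) v u := by
  filter_upwards [h, h'] with ω h h' hω
  exact hω.elim h h'

theorem ConeLE.of_cover {A : ℕ → Set Ω} (hcov : ∀ᵐ ω ∂P, ω ∈ C → ∃ j, ω ∈ A j)
    (h : ∀ j, N.ConeLE k f (C ∩ A j) v u) : N.ConeLE k f C v u := by
  filter_upwards [hcov, ae_all_iff.2 h] with ω hcov h hω
  obtain ⟨j, hj⟩ := hcov hω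
  exact h j ⟨hω, hj⟩

theorem ConeLE.trans (hk : ∀ᵐ ω ∂P, 0 ≤ k ω) (h₁ : N.ConeLE k f A v u)
    (h₂ : N.ConeLE k f A u w) : N.ConeLE k f A v w := by
  filter_upwards [hk, h₁, h₂, N.nm_sub_le_nm_sub_add w u v] with ω hk h₁ h₂ htri hω
  nlinarith [h₁ hω, h₂ hω, mul_le_mul_of_nonneg_left htri hk]

theorem ConeLE.apply_le (hk : ∀ᵐ ω ∂P, 0 ≤ k ω) (h : N.ConeLE k f A v u) :
    ∀ᵐ ω ∂P, ω ∈ A → f v ω ≤ f u ω := by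
  filter_upwards [hk, h, N.nm_nonneg (u - v)] with ω hk h hnm hω
  nlinarith [h hω, mul_nonneg hk hnm]

theorem ConeLE.congr_right (hf : N.IsDual f) (h : N.ConeLE k f A v u) (hw : N.AEEqOn A w u) :
    N.ConeLE k f A v w := by
  filter_upwards [h, hw.nm_sub_eq v, hw.apply_eq hf] with ω h h1 h2 hω
  rw [h1 hω, h2 hω]
  exact h hω

theorem mem_image_add_Kcone_iff (hf : N.IsDual f) :
    u ∈ (fun y => y + v) '' N.Kcone f k ↔ N.ConeLE k f univ v u := by
  have hK : u - v ∈ N.Kcone f k ↔ N.ConeLE k f univ v u := by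
    refine ⟨fun h => ?_, fun h => ?_⟩ <;>
    filter_upwards [h, hf.apply_sub u v] with ω h hsub
    · exact fun _ => hsub ▸ h
    · exact hsub ▸ h trivial
  rw [← hK]
  exact ⟨fun ⟨y, hy, hyu⟩ => by rwa [← hyu, add_sub_cancel_right],
    fun h => ⟨u - v, h, sub_add_cancel u v⟩⟩

theorem ConeLE.eq_of_apply_le (hk : k ∈ L0pp P) (h : N.ConeLE k f univ v u)
    (hle : ∀ᵐ ω ∂P, f u ω ≤ f v ω) : u = v := by
  refine N.eq_of_ae_nm_sub_eq_zero ?_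
  filter_upwards [hk, h, hle, N.nm_nonneg (u - v)] with ω hk h hle hnm
  exact le_antisymm (nonpos_of_mul_nonpos_right (by linarith [h trivial]) hk) hnm

theorem ConeLE.mul_nm_sub_le (hk : ∀ᵐ ω ∂P, 0 ≤ k ω) {u' : E} (h : N.ConeLE k f A v u)
    (h' : N.ConeLE k f A v u') {δ : ℝ} (hu : ∀ᵐ ω ∂P, ω ∈ A → f u ω ≤ f v ω + δ)
    (hu' : ∀ᵐ ω ∂P, ω ∈ A → f u' ω ≤ f v ω + δ) :
    ∀ᵐ ω ∂P, ω ∈ A → k ω * N.nm (u - u') ω ≤ 2 * δ := by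
  filter_upwards [hk, h, h', hu, hu', N.nm_sub_le_nm_sub_add u v u', N.nm_sub_comm v u']
    with ω hk h h' hu hu' htri hcomm hω
  rw [hcomm] at htri
  nlinarith [h hω, h' hω, hu hω, hu' hω, mul_le_mul_of_nonneg_left htri hk]

/-- Upper sets of the cone order are `𝒯_c`-closed. -/
theorem coneLE_of_forall_nm_sub_le (hf : N.IsDual f) (hk : ∀ᵐ ω ∂P, 0 ≤ k ω) {y : E}
    (h : ∀ m : ℕ, ∃ u, N.ConeLE k f univ v u ∧ ∀ᵐ ω ∂P, N.nm (u - y) ω ≤ 1 / (m + 1)) :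
    N.ConeLE k f univ v y := by
  obtain ⟨ξ, hξ0, hξ⟩ := hf.2.2
  choose u hu hnear using h
  have key : ∀ m : ℕ, ∀ᵐ ω ∂P,
      k ω * N.nm (y - v) ω ≤ f y ω - f v ω + (k ω + ξ ω) * (1 / (m + 1)) := fun m => by
    filter_upwards [hk, hξ0, hu m, hnear m, hξ (u m - y), hf.apply_sub (u m) y,
      N.nm_sub_le_nm_sub_add y (u m) v, N.nm_sub_comm y (u m)]
      with ω hk hξ0 hu hnear hξ hsub htri hcomm
    rw [hcomm] at htri
    rw [hsub] at hξ
    nlinarith [hu trivial, (abs_le.1 hξ).2, mul_le_mul_of_nonneg_left htri hk,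
      mul_le_mul_of_nonneg_left hnear hk, mul_le_mul_of_nonneg_left hnear hξ0]
  filter_upwards [ae_all_iff.2 key] with ω h _
  refine ge_of_tendsto' (x := atTop) ?_ h
  simpa using (tendsto_one_div_add_atTop_nhds_zero_nat.const_mul (k ω + ξ ω)).const_add
    (f y ω - f v ω)

theorem HasCC.concatClosed_image_coneLE {G : Set E} (hG : N.HasCC G) (hf : N.IsDual f)
    (v : E) : ConcatClosed (f '' {u | u ∈ G ∧ N.ConeLE k f univ v u}) := by
  intro a ha B hB hcov
  choose u hu hua using ha
  obtain ⟨w, hwG, A, hAcov, hA⟩ := hG.exists_aeEqOn (fun j => (hu j).1) hB hcov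
  have hvw : N.ConeLE k f univ v w := ConeLE.of_cover (hAcov.mono fun _ h _ => h) fun j =>
    ((hu j).2.mono (subset_univ _)).congr_right hf ((hA j).2.mono inter_subset_right)
  refine ⟨f w, ⟨w, ⟨hwG, hvw⟩, rfl⟩, ?_⟩
  filter_upwards [hAcov, ae_all_iff.2 fun j => (hA j).2.apply_eq hf] with ω ⟨j, hj⟩ h
  exact ⟨j, (hA j).1 hj, hua j ▸ h j hj⟩

theorem HasCC.exists_coneLE_forall_le_add [IsFiniteMeasure P] {G : Set E} (hG : N.HasCC G)
    (hf : N.IsDual f) {ξ : L0 P} (hξ : ∀ x ∈ G, ∀ᵐ ω ∂P, f x ω ≤ ξ ω) (hv : v ∈ G) {δ : ℝ}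
    (hδ : 0 < δ) : ∃ w ∈ G, N.ConeLE k f univ v w ∧
      ∀ u ∈ G, N.ConeLE k f univ v u → ∀ᵐ ω ∂P, f u ω ≤ f w ω + δ := by
  obtain ⟨_, ⟨w, hw, rfl⟩, hmax⟩ := (hG.concatClosed_image_coneLE hf v).exists_forall_ae_le_add
    ⟨f v, v, ⟨hv, N.coneLE_refl k f univ v⟩, rfl⟩ (by rintro _ ⟨u, hu, rfl⟩; exact hξ u hu.1) hδ
  exact ⟨w, hw.1, hw.2, fun u hu huv => hmax _ ⟨u, ⟨hu, huv⟩, rfl⟩⟩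

end ConeOrder

section MaxSeq

variable {N : RNModule P E} {k : L0 P} {f : E → L0 P} {G : Set E} {z : E} {x : ℕ → E}

variable (N k f) in
structure IsConeMaxSeq (G : Set E) (z : E) (x : ℕ → E) : Prop where
  mem : ∀ n, x n ∈ G
  coneLE_zero : N.ConeLE k f univ z (x 0)
  coneLE_succ : ∀ n, N.ConeLE k f univ (x n) (x (n + 1))
  apply_le : ∀ n, ∀ u ∈ G, N.ConeLE k f univ (x n) u → ∀ᵐ ω ∂P, f u ω ≤ f (x n) ω + 1 / (n + 1)

theorem HasCC.exists_isConeMaxSeq [IsFiniteMeasure P] (hG : N.HasCC G)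
    (hk : ∀ᵐ ω ∂P, 0 ≤ k ω) (hf : N.IsDual f) {ξ : L0 P} (hξ : ∀ x ∈ G, ∀ᵐ ω ∂P, f x ω ≤ ξ ω)
    (hz : z ∈ G) : ∃ x, N.IsConeMaxSeq k f G z x := by
  have hstep : ∀ (v : {v : E // v ∈ G}) (n : ℕ), ∃ w : {w : E // w ∈ G}, N.ConeLE k f univ v w ∧
      ∀ u ∈ G, N.ConeLE k f univ v u → ∀ᵐ ω ∂P, f u ω ≤ f w ω + 1 / (n + 1) := fun v n => by
    obtain ⟨w, hw, h⟩ := hG.exists_coneLE_forall_le_add hf hξ v.2 Nat.one_div_pos_of_nat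
    exact ⟨⟨w, hw⟩, h⟩
  choose next hnext_le hnext_max using hstep
  let y : ℕ → {v : E // v ∈ G} := fun n => Nat.rec (next ⟨z, hz⟩ 0) (fun n v => next v (n + 1)) n
  refine ⟨fun n => (y n).1, fun n => (y n).2, hnext_le _ 0, fun n => hnext_le (y n) (n + 1), ?_⟩
  rintro (_ | n) u hu hyu
  · exact hnext_max _ 0 u hu ((hnext_le _ 0).trans hk hyu)
  · exact hnext_max (y n) (n + 1) u hu ((hnext_le (y n) (n + 1)).trans hk hyu)

theorem IsConeMaxSeq.coneLE_of_le (hx : N.IsConeMaxSeq k f G z x) (hk : ∀ᵐ ω ∂P, 0 ≤ k ω)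
    {i j : ℕ} (hij : i ≤ j) : N.ConeLE k f univ (x i) (x j) := by
  induction j, hij using Nat.le_induction with
  | base => exact N.coneLE_refl k f univ (x i)
  | succ j _ ih => exact ih.trans hk (hx.coneLE_succ j)

theorem IsConeMaxSeq.apply_le_of_coneLE_on (hx : N.IsConeMaxSeq k f G z x) (hG : N.HasCC G)
    (hf : N.IsDual f) {A : Set Ω} (hA : MeasurableSet A) {n : ℕ} {u : E} (hu : u ∈ G)
    (h : N.ConeLE k f A (x n) u) : ∀ᵐ ω ∂P, ω ∈ A → f u ω ≤ f (x n) ω + 1 / (n + 1) := by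
  -- `u` on `A` glued with `x n` off `A` lies above `x n` everywhere.
  obtain ⟨w, hwG, hwu, hwx⟩ := hG.exists_aeEqOn_piecewise hu (hx.mem n) hA
  have hxw : N.ConeLE k f univ (x n) w := by
    rw [← union_compl_self A]
    exact (h.congr_right hf hwu).union ((N.coneLE_refl k f _ _).congr_right hf hwx)
  filter_upwards [hx.apply_le n w hwG hxw, hwu.apply_eq hf] with ω h1 h2 hω
  rw [← h2 hω]
  exact h1

variable (N k f) in
/-- The tail of `x` cut at the random index `ν`. -/
def coneTail (G : Set E) (x : ℕ → E) (ν : Ω → ℕ) : Set E :=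
  {u | u ∈ G ∧ ∀ j, N.ConeLE k f {ω | j ≤ ν ω} (x j) u}

theorem coneTail_anti {ν ν' : Ω → ℕ} (h : ν ≤ ν') : N.coneTail k f G x ν' ⊆ N.coneTail k f G x ν :=
  fun _ hu => ⟨hu.1, fun j => (hu.2 j).mono fun ω hω => le_trans hω (h ω)⟩

theorem coneLE_of_mem_coneTail_const {n : ℕ} {u : E} (hu : u ∈ N.coneTail k f G x fun _ => n) :
    N.ConeLE k f univ (x n) u :=
  (hu.2 n).mono fun _ _ => Nat.le_refl n

theorem IsConeMaxSeq.coneTail_nonempty (hx : N.IsConeMaxSeq k f G z x) (hG : N.HasCC G)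
    (hk : ∀ᵐ ω ∂P, 0 ≤ k ω) (hf : N.IsDual f) {ν : Ω → ℕ} (hν : Measurable ν) :
    (N.coneTail k f G x ν).Nonempty := by
  obtain ⟨w, hwG, A, hcov, hA⟩ := hG.exists_aeEqOn hx.mem
    (fun i => hν (measurableSet_singleton i)) (.of_forall fun ω => ⟨ν ω, rfl⟩)
  refine ⟨w, hwG, fun j => ConeLE.of_cover (hcov.mono fun _ h _ => h) fun i => ?_⟩
  by_cases hji : j ≤ i
  · exact ((hx.coneLE_of_le hk hji).mono (subset_univ _)).congr_right hf
      ((hA i).2.mono inter_subset_right)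
  · refine .of_forall fun ω hω => absurd hω.1 ?_
    have : ν ω = i := (hA i).1 hω.2
    show ¬j ≤ ν ω
    omega

theorem IsConeMaxSeq.mul_nm_sub_le (hx : N.IsConeMaxSeq k f G z x) (hG : N.HasCC G)
    (hk : ∀ᵐ ω ∂P, 0 ≤ k ω) (hf : N.IsDual f) {ν : Ω → ℕ} (hν : Measurable ν) {u u' : E}
    (hu : u ∈ N.coneTail k f G x ν) (hu' : u' ∈ N.coneTail k f G x ν) :
    ∀ᵐ ω ∂P, k ω * N.nm (u - u') ω ≤ 2 / (ν ω + 1) := by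
  have h : ∀ j : ℕ, ∀ᵐ ω ∂P, ω ∈ ν ⁻¹' {j} → k ω * N.nm (u - u') ω ≤ 2 * (1 / (j + 1)) := by
    intro j
    have hsub : ν ⁻¹' {j} ⊆ {ω | j ≤ ν ω} := fun ω hω => (mem_singleton_iff.1 hω).ge
    have hmeas := hν (measurableSet_singleton j)
    exact ConeLE.mul_nm_sub_le hk ((hu.2 j).mono hsub) ((hu'.2 j).mono hsub)
      (hx.apply_le_of_coneLE_on hG hf hmeas hu.1 ((hu.2 j).mono hsub))
      (hx.apply_le_of_coneLE_on hG hf hmeas hu'.1 ((hu'.2 j).mono hsub))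
  filter_upwards [ae_all_iff.2 h] with ω h
  have := h (ν ω) rfl
  rwa [mul_one_div] at this

variable (N k f) in
def coneTailFilter (G : Set E) (x : ℕ → E) : Filter E :=
  ⨅ ν ∈ {ν : Ω → ℕ | Measurable ν}, 𝓟 (N.coneTail k f G x ν)

theorem hasBasis_coneTailFilter :
    (N.coneTailFilter k f G x).HasBasis (fun ν : Ω → ℕ => Measurable ν) (N.coneTail k f G x) :=
  hasBasis_biInf_principal (fun ν hν ν' hν' => ⟨ν ⊔ ν', hν.sup hν', coneTail_anti le_sup_left,
    coneTail_anti le_sup_right⟩) ⟨fun _ => 0, measurable_const⟩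

/-- On `{ν = j}` two points of a tail are `2/(k(j+1))` apart, and `ν = ⌈2/(k e)⌉` makes this
at most `e`. -/
theorem IsConeMaxSeq.coneTailFilter_prod_le (hx : N.IsConeMaxSeq k f G z x) (hG : N.HasCC G)
    (hk : k ∈ L0pp P) (hf : N.IsDual f) :
    N.coneTailFilter k f G x ×ˢ N.coneTailFilter k f G x ≤ N.cUniformity := by
  have hk0 := ae_nonneg_of_mem_L0pp hk
  refine le_iInf₂ fun e he => le_principal_iff.2 ?_
  set ν : Ω → ℕ := fun ω => ⌈2 / (k ω * e ω)⌉₊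
  have hν : Measurable ν := (measurable_const.div
    (k.stronglyMeasurable.measurable.mul e.stronglyMeasurable.measurable)).nat_ceil
  refine mem_of_superset (prod_mem_prod (hasBasis_coneTailFilter.mem_of_mem hν)
    (hasBasis_coneTailFilter.mem_of_mem hν)) ?_
  rintro ⟨u, u'⟩ ⟨hu, hu'⟩
  show ∀ᵐ ω ∂P, N.nm (u - u') ω ≤ e ω
  filter_upwards [hx.mul_nm_sub_le hG hk0 hf hν hu hu', hk, he] with ω h hkω heω
  have hke := mul_pos hkω heω
  have hν_le : 2 / ((ν ω : ℝ) + 1) ≤ k ω * e ω := by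
    have := Nat.le_ceil (2 / (k ω * e ω))
    rw [div_le_iff₀ hke] at this
    rw [div_le_iff₀ (by positivity)]
    nlinarith
  exact le_of_mul_le_mul_left (h.trans hν_le) hkω

theorem ball_mem_cNhds {e : L0 P} (he : e ∈ L0pp P) (y : E) :
    {u | ∀ᵐ ω ∂P, N.nm (u - y) ω ≤ e ω} ∈ N.cNhds y :=
  mem_iInf_of_mem e (mem_iInf_of_mem he (mem_principal_self _))

theorem IsConeMaxSeq.exists_coneLE_limit (hx : N.IsConeMaxSeq k f G z x) (hcomp : N.cComplete)
    (hGcl : N.cClosed G) (hG : N.HasCC G) (hk : k ∈ L0pp P) (hf : N.IsDual f) :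
    ∃ y ∈ G, ∀ n, N.ConeLE k f univ (x n) y := by
  have hk0 := ae_nonneg_of_mem_L0pp hk
  have hB := hasBasis_coneTailFilter (N := N) (k := k) (f := f) (G := G) (x := x)
  have hne : (N.coneTailFilter k f G x).NeBot :=
    hB.neBot_iff.2 fun hν => hx.coneTail_nonempty hG hk0 hf hν
  obtain ⟨y, hy⟩ := hcomp _ hne (hx.coneTailFilter_prod_le hG hk hf)
  have hFG : N.coneTailFilter k f G x ≤ 𝓟 G :=
    le_principal_iff.2
      (mem_of_superset (hB.mem_of_mem (measurable_const (a := 0))) fun _ hu => hu.1)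
  refine ⟨y, hGcl y (neBot_of_le (le_inf hy hFG)), fun n =>
    coneLE_of_forall_nm_sub_le hf hk0 fun m => ?_⟩
  have hc : ∀ᵐ ω ∂P, AEEqFun.const Ω (1 / ((m : ℝ) + 1)) ω = 1 / (m + 1) :=
    AEEqFun.coeFn_const _ _
  have hcpos : AEEqFun.const Ω (1 / ((m : ℝ) + 1)) ∈ L0pp P :=
    Eventually.mono hc fun ω h => by rw [h]; exact Nat.one_div_pos_of_nat
  obtain ⟨u, hu, hnear⟩ :=
    hne.nonempty_of_mem (inter_mem (hB.mem_of_mem (measurable_const (a := n)))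
      (hy (ball_mem_cNhds hcpos y)))
  refine ⟨u, coneLE_of_mem_coneTail_const hu, ?_⟩
  filter_upwards [hnear, hc] with ω h hc
  rwa [← hc]

theorem IsConeMaxSeq.eq_of_coneLE (hx : N.IsConeMaxSeq k f G z x) (hk : k ∈ L0pp P) {y u : E}
    (hxy : ∀ n, N.ConeLE k f univ (x n) y) (hu : u ∈ G) (hyu : N.ConeLE k f univ y u) :
    u = y := by
  have hk0 := ae_nonneg_of_mem_L0pp hk
  have hle : ∀ n : ℕ, ∀ᵐ ω ∂P, f u ω ≤ f y ω + 1 / (n + 1) := fun n => by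
    filter_upwards [hx.apply_le n u hu ((hxy n).trans hk0 hyu), (hxy n).apply_le hk0]
      with ω h1 h2
    linarith [h2 trivial]
  refine hyu.eq_of_apply_le hk ?_
  filter_upwards [ae_all_iff.2 hle] with ω h
  refine ge_of_tendsto' (x := atTop) ?_ h
  simpa using tendsto_one_div_add_atTop_nhds_zero_nat.const_add (f y ω)

end MaxSeq

end RNModule

theorem exists_cone_maximal_general
    {Ω : Type*} [MeasurableSpace Ω] {P : Measure Ω} [IsProbabilityMeasure P]
    {E : Type*} [AddCommGroup E] (N : RNModule P E) (hcomp : N.cComplete)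
    (k : L0 P) (hk : k ∈ L0pp P)
    (G : Set E) (hGcl : N.cClosed G) (hGCC : N.HasCC G)
    (f : E → L0 P) (hf : N.IsDual f)
    (hfbdd : ∃ ξ : L0 P, ∀ x ∈ G, ∀ᵐ ω ∂P, f x ω ≤ ξ ω)
    (ε : L0 P) (z : E) (hz : z ∈ G)
    (hsup : ∃ s : L0 P, IsSupOnR f G s ∧ ∀ᵐ ω ∂P, s ω ≤ f z ω + ε ω) :
    ∃ x₀ ∈ G,
      x₀ ∈ (fun y => y + z) '' N.Kcone f k ∧
      (∀ᵐ ω ∂P, N.nm (x₀ - z) ω ≤ (k ω)⁻¹ * ε ω) ∧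
      G ∩ ((fun y => y + x₀) '' N.Kcone f k) = {x₀} := by
  obtain ⟨ξ, hξ⟩ := hfbdd
  obtain ⟨s, hs, hsz⟩ := hsup
  have hk0 := ae_nonneg_of_mem_L0pp hk
  obtain ⟨x, hx⟩ := hGCC.exists_isConeMaxSeq hk0 hf hξ hz
  obtain ⟨y, hyG, hxy⟩ := hx.exists_coneLE_limit hcomp hGcl hGCC hk hf
  have hzy : N.ConeLE k f univ z y := hx.coneLE_zero.trans hk0 (hxy 0)
  refine ⟨y, hyG, (RNModule.mem_image_add_Kcone_iff hf).2 hzy, ?_, ?_⟩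
  · filter_upwards [hzy, hs.1 y hyG, hsz, hk] with ω hzy hys hsz hkω
    rw [le_inv_mul_iff₀ hkω]
    linarith [hzy trivial]
  · refine eq_singleton_iff_unique_mem.2 ⟨⟨hyG, (RNModule.mem_image_add_Kcone_iff hf).2
      (N.coneLE_refl k f univ y)⟩, fun u ⟨hu, huK⟩ => ?_⟩
    exact hx.eq_of_coneLE hk hxy hu ((RNModule.mem_image_add_Kcone_iff hf).1 huK)

/-- Lemma 4.9. If `f ∈ E*` is bounded from above on `G` and
`⋁f(G) ≤ f(z) + ε` for some `z ∈ G`, `ε ∈ L⁰₊₊`, then there is `x₀ ∈ G` with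
(1) `x₀ ∈ K(f,k) + z`, (2) `‖x₀ - z‖ ≤ k⁻¹ε`, (3) `G ∩ (K(f,k) + x₀) = {x₀}`. -/
theorem exists_cone_maximal
    {Ω : Type*} [MeasurableSpace Ω] {P : Measure Ω} [IsProbabilityMeasure P]
    {E : Type*} [AddCommGroup E] (N : RNModule P E) (hcomp : N.cComplete)
    (hCCE : N.HasCC Set.univ)
    (k : L0 P) (hk : k ∈ L0pp P)
    (G : Set E) (hGcl : N.cClosed G) (hGCC : N.HasCC G)
    (f : E → L0 P) (hf : N.IsDual f)
    (hfbdd : ∃ ξ : L0 P, ∀ x ∈ G, ∀ᵐ ω ∂P, f x ω ≤ ξ ω)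
    (ε : L0 P) (hε : ε ∈ L0pp P) (z : E) (hz : z ∈ G)
    (hsup : ∃ s : L0 P, IsSupOnR f G s ∧ ∀ᵐ ω ∂P, s ω ≤ f z ω + ε ω) :
    ∃ x₀ ∈ G,
      x₀ ∈ (fun y => y + z) '' N.Kcone f k ∧
      (∀ᵐ ω ∂P, N.nm (x₀ - z) ω ≤ (k ω)⁻¹ * ε ω) ∧
      G ∩ ((fun y => y + x₀) '' N.Kcone f k) = {x₀} :=
  exists_cone_maximal_general N hcomp k hk G hGcl hGCC f hf hfbdd ε z hz hsup

end GYY
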